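/- arXiv:2503.05269 — 2 statements merged into one kernel-verified Lean document; each statement's English description precedes it below -/
import Mathlib

section
/- Let X ≥ 3 be a real number. Then the double integral I(X) = ∫_{1/log X}^{10} ∫_{1/log X}^{10} (xy)^{-3/4} · (y-x)^{-1/2} · (x+y)^{-1/2} · 1_{y - x ≥ 1/log X} dx dy satisfies I(X) ≤ C (log X)^{1/2} for an absolute constant C. -/
/-!
Put `a = 1 / log X`; the constraint `y - x ≥ a` confines `x` to `[a, y - a]`. Comparing
`x` with `y - x` gives
`(xy)^{-3/4} (y-x)^{-1/2} (x+y)^{-1/2} ≤ y^{-5/4} (x^{-5/4} + (y-x)^{-5/4})`,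
and `∫_a^∞ t^{-5/4} dt = 4 a^{-1/4}`. Hence the inner integral is at most `8 a^{-1/4} y^{-5/4}`
and the double integral at most `32 a^{-1/2} = 32 (log X)^{1/2}`.
-/

open MeasureTheory

open Set Real intervalIntegral

/-- `f` need not be integrable: otherwise `∫ f = 0 ≤ ∫ g`. -/
lemma integral_le_integral_of_le_of_nonneg {f g : ℝ → ℝ} {a b : ℝ} (hab : a ≤ b)
    (hg : IntervalIntegrable g volume a b) (hg0 : ∀ x ∈ Icc a b, 0 ≤ g x)
    (hfg : ∀ x ∈ Icc a b, f x ≤ g x) : ∫ x in a..b, f x ≤ ∫ x in a..b, g x := by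
  by_cases hf : IntervalIntegrable f volume a b
  · exact integral_mono_on hab hf hg hfg
  · rw [integral_undef hf]
    exact integral_nonneg hab hg0

lemma integral_le_integral_of_le_of_eq_zero {f g : ℝ → ℝ} {a b c : ℝ} (hac : a ≤ c)
    (hcb : c ≤ b) (hg : IntervalIntegrable g volume a c) (hg0 : ∀ x ∈ Icc a c, 0 ≤ g x)
    (hfg : ∀ x ∈ Icc a c, f x ≤ g x) (hf0 : ∀ x ∈ Ioc c b, f x = 0) :
    ∫ x in a..b, f x ≤ ∫ x in a..c, g x := by
  by_cases hf : IntervalIntegrable f volume a b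
  · have hf₁ : IntervalIntegrable f volume a c :=
      hf.mono_set (uIcc_subset_uIcc_left (mem_uIcc_of_le hac hcb))
    have hf₂ : IntervalIntegrable f volume c b :=
      hf.mono_set (uIcc_subset_uIcc_right (mem_uIcc_of_le hac hcb))
    have htail : ∫ x in c..b, f x = 0 := by
      rw [integral_of_le hcb]
      exact setIntegral_eq_zero_of_forall_eq_zero hf0
    rw [← integral_add_adjacent_intervals hf₁ hf₂, htail, add_zero]
    exact integral_mono_on hac hf₁ hg hfg
  · rw [integral_undef hf]
    exact integral_nonneg hac hg0

lemma integral_rpow_le_of_lt_neg_one {a b r : ℝ} (ha : 0 < a) (hab : a ≤ b) (hr : r < -1) :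
    ∫ x in a..b, x ^ r ≤ a ^ (r + 1) / -(r + 1) := by
  have h0 : (0 : ℝ) ∉ uIcc a b := notMem_uIcc_of_lt ha (ha.trans_le hab)
  rw [integral_rpow (Or.inr ⟨hr.ne, h0⟩), ← neg_div_neg_eq, neg_sub]
  gcongr
  · linarith
  · exact sub_le_self _ (rpow_nonneg (ha.le.trans hab) _)

lemma rpow_neg_mul_rpow_neg_le_add {u v p q : ℝ} (hu : 0 < u) (hv : 0 < v) (hp : 0 ≤ p)
    (hq : 0 ≤ q) : u ^ (-p) * v ^ (-q) ≤ u ^ (-(p + q)) + v ^ (-(p + q)) := by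
  wlog huv : u ≤ v generalizing u v p q
  · rw [mul_comm, add_comm p, add_comm (u ^ _)]
    exact this hv hu hq hp (le_of_not_ge huv)
  calc u ^ (-p) * v ^ (-q) ≤ u ^ (-p) * u ^ (-q) := by
        gcongr u ^ (-p) * ?_
        exact rpow_le_rpow_of_nonpos hu huv (neg_nonpos.2 hq)
    _ = u ^ (-(p + q)) := by rw [← rpow_add hu, neg_add]
    _ ≤ u ^ (-(p + q)) + v ^ (-(p + q)) := le_add_of_nonneg_right (rpow_nonneg hv.le _)

noncomputable def kernel (x y : ℝ) : ℝ :=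
  (x * y) ^ (-(3 / 4 : ℝ)) * (y - x) ^ (-(1 / 2 : ℝ)) * (x + y) ^ (-(1 / 2 : ℝ))

lemma kernel_le {x y : ℝ} (hx : 0 < x) (hxy : x < y) :
    kernel x y ≤ y ^ (-(5 / 4 : ℝ)) * (x ^ (-(5 / 4 : ℝ)) + (y - x) ^ (-(5 / 4 : ℝ))) := by
  have hy : 0 < y := hx.trans hxy
  have hyx : 0 < y - x := sub_pos.2 hxy
  have hsplit : x ^ (-(3 / 4 : ℝ)) * (y - x) ^ (-(1 / 2 : ℝ)) ≤
      x ^ (-(5 / 4 : ℝ)) + (y - x) ^ (-(5 / 4 : ℝ)) := by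
    convert rpow_neg_mul_rpow_neg_le_add hx hyx (p := 3 / 4) (q := 1 / 2) (by norm_num)
      (by norm_num) using 3 <;> norm_num
  calc kernel x y
      = (x ^ (-(3 / 4 : ℝ)) * (y - x) ^ (-(1 / 2 : ℝ))) *
          (y ^ (-(3 / 4 : ℝ)) * (x + y) ^ (-(1 / 2 : ℝ))) := by
        rw [kernel, mul_rpow hx.le hy.le]; ring
    _ ≤ (x ^ (-(5 / 4 : ℝ)) + (y - x) ^ (-(5 / 4 : ℝ))) *
          (y ^ (-(3 / 4 : ℝ)) * y ^ (-(1 / 2 : ℝ))) := by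
        gcongr ?_ * (_ * ?_)
        exact rpow_le_rpow_of_nonpos hy (by linarith) (by norm_num)
    _ = y ^ (-(5 / 4 : ℝ)) * (x ^ (-(5 / 4 : ℝ)) + (y - x) ^ (-(5 / 4 : ℝ))) := by
        rw [← rpow_add hy]; norm_num; ring

lemma integral_kernel_le {a b y : ℝ} (ha : 0 < a) (hab : a ≤ b) (hy : 0 ≤ y)
    (hyb : y - a ≤ b) :
    ∫ x in a..b, (if a ≤ y - x then kernel x y else 0) ≤
      8 * a ^ (-(1 / 4 : ℝ)) * y ^ (-(5 / 4 : ℝ)) := by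
  rcases lt_or_ge y (2 * a) with hy2 | hy2
  · have hzero :
        EqOn (fun x ↦ if a ≤ y - x then kernel x y else 0) (fun _ ↦ 0) (uIcc a b) :=
      fun x hx ↦ if_neg (by rw [uIcc_of_le hab] at hx; linarith [hx.1])
    rw [integral_congr hzero, intervalIntegral.integral_zero]
    positivity
  have hc : a ≤ y - a := by linarith
  have hpos : ∀ x ∈ Icc a (y - a), 0 < x ∧ 0 < y - x :=
    fun x hx ↦ ⟨ha.trans_le hx.1, by linarith [hx.2]⟩
  have hmaj : ∀ x ∈ Icc a (y - a),
      0 ≤ y ^ (-(5 / 4 : ℝ)) * (x ^ (-(5 / 4 : ℝ)) + (y - x) ^ (-(5 / 4 : ℝ))) :=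
    fun x hx ↦ mul_nonneg (rpow_nonneg hy _)
      (add_nonneg (rpow_nonneg (hpos x hx).1.le _) (rpow_nonneg (hpos x hx).2.le _))
  have hint : IntervalIntegrable (fun x ↦ x ^ (-(5 / 4 : ℝ))) volume a (y - a) :=
    intervalIntegrable_rpow (Or.inr (notMem_uIcc_of_lt ha (ha.trans_le hc)))
  have hint' : IntervalIntegrable (fun x ↦ (y - x) ^ (-(5 / 4 : ℝ))) volume a (y - a) := by
    simpa using (hint.comp_sub_left y).symm
  have hrefl : ∫ x in a..(y - a), (y - x) ^ (-(5 / 4 : ℝ)) =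
      ∫ x in a..(y - a), x ^ (-(5 / 4 : ℝ)) := by
    rw [integral_comp_sub_left (· ^ (-(5 / 4 : ℝ))), sub_sub_cancel]
  have hpow : ∫ x in a..(y - a), x ^ (-(5 / 4 : ℝ)) ≤ 4 * a ^ (-(1 / 4 : ℝ)) := by
    convert integral_rpow_le_of_lt_neg_one ha hc (by norm_num : -(5 / 4 : ℝ) < -1) using 1
    norm_num [div_eq_mul_inv, mul_comm]
  calc ∫ x in a..b, (if a ≤ y - x then kernel x y else 0)
      ≤ ∫ x in a..(y - a), y ^ (-(5 / 4 : ℝ)) *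
          (x ^ (-(5 / 4 : ℝ)) + (y - x) ^ (-(5 / 4 : ℝ))) := by
        refine integral_le_integral_of_le_of_eq_zero hc hyb ((hint.add hint').const_mul _)
          hmaj (fun x hx ↦ ?_) (fun x hx ↦ if_neg (by linarith [hx.1]))
        split_ifs
        · exact kernel_le (hpos x hx).1 (by linarith [(hpos x hx).2])
        · exact hmaj x hx
    _ = 2 * y ^ (-(5 / 4 : ℝ)) * ∫ x in a..(y - a), x ^ (-(5 / 4 : ℝ)) := by
        rw [intervalIntegral.integral_const_mul, integral_add hint hint', hrefl]; ring
    _ ≤ 2 * y ^ (-(5 / 4 : ℝ)) * (4 * a ^ (-(1 / 4 : ℝ))) := by gcongr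
    _ = 8 * a ^ (-(1 / 4 : ℝ)) * y ^ (-(5 / 4 : ℝ)) := by ring

lemma integral_integral_kernel_le {a b : ℝ} (ha : 0 < a) (hab : a ≤ b) :
    ∫ y in a..b, ∫ x in a..b, (if a ≤ y - x then kernel x y else 0) ≤
      32 * a ^ (-(1 / 2 : ℝ)) := by
  have hpow : ∫ y in a..b, y ^ (-(5 / 4 : ℝ)) ≤ 4 * a ^ (-(1 / 4 : ℝ)) := by
    convert integral_rpow_le_of_lt_neg_one ha hab (by norm_num : -(5 / 4 : ℝ) < -1) using 1
    norm_num [div_eq_mul_inv, mul_comm]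
  calc ∫ y in a..b, ∫ x in a..b, (if a ≤ y - x then kernel x y else 0)
      ≤ ∫ y in a..b, 8 * a ^ (-(1 / 4 : ℝ)) * y ^ (-(5 / 4 : ℝ)) := by
        refine integral_le_integral_of_le_of_nonneg hab
          ((intervalIntegrable_rpow
            (Or.inr (notMem_uIcc_of_lt ha (ha.trans_le hab)))).const_mul _)
          (fun y hy ↦ ?_) (fun y hy ↦ ?_)
        · have := ha.trans_le hy.1; positivity
        · exact integral_kernel_le ha hab (ha.le.trans hy.1) (by linarith [hy.2])
    _ ≤ 8 * a ^ (-(1 / 4 : ℝ)) * (4 * a ^ (-(1 / 4 : ℝ))) := by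
        rw [intervalIntegral.integral_const_mul]; gcongr
    _ = 32 * a ^ (-(1 / 2 : ℝ)) := by
        rw [mul_mul_mul_comm, ← rpow_add ha]; norm_num

theorem stmt_4 :
    ∃ C : ℝ, ∀ X : ℝ, 3 ≤ X →
      (∫ y in (1 / Real.log X)..10, ∫ x in (1 / Real.log X)..10,
          (if 1 / Real.log X ≤ y - x then
            (x * y) ^ (-(3 / 4 : ℝ)) * (y - x) ^ (-(1 / 2 : ℝ)) * (x + y) ^ (-(1 / 2 : ℝ))
          else 0)) ≤ C * (Real.log X) ^ ((1 : ℝ) / 2) := by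
  refine ⟨32, fun X hX ↦ ?_⟩
  have hlog : 1 / 10 ≤ Real.log X := by
    have := (log_le_log two_pos (by linarith)).trans' log_two_gt_d9.le
    linarith
  have hlog0 : 0 < Real.log X := by linarith
  have ha10 : 1 / Real.log X ≤ 10 := by
    rw [div_le_iff₀ hlog0]; linarith
  have hscale : (1 / Real.log X) ^ (-(1 / 2 : ℝ)) = Real.log X ^ ((1 : ℝ) / 2) := by
    rw [one_div, inv_rpow hlog0.le, ← rpow_neg hlog0.le, neg_neg]
  exact hscale ▸ integral_integral_kernel_le (by positivity) ha10
end

section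
/- Let k ≥ 2 and let L_0 = {2e_j* : 1 ≤ j ≤ k} ∪ {e_i* + e_j* : 1 ≤ i < j ≤ k}, a family of q = k(k+1)/2 linear forms on ℝ^k. There is no proper subfamily L' ⊊ L_0 such that the all-ones functional B = ∑_j e_j* lies in the span of L' and #L' − rank(L') = #L_0 − rank(L_0) = k(k-1)/2. -/
/-!
The deficiency `#s - rank s` of a finite family of vectors is monotone under inclusion, and
deleting a vector that lies in the span of the remaining ones lowers it by exactly one. Index
`L₀` by `Sym2 (Fin k)`, `{i, j} ↦ eᵢ* + eⱼ*`. For `k ≥ 2` every member of `L₀` lies in the span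
of the others: `2eᵢ* = 2(eᵢ* + eₗ*) - 2eₗ*` for any `l ≠ i`, and `eᵢ* + eⱼ* = ½·2eᵢ* + ½·2eⱼ*`.
Hence every proper subfamily has deficiency strictly below that of `L₀`, which is
`k(k+1)/2 - k = k(k-1)/2`.
-/

open Submodule Set Module

section Deficiency

variable {K V : Type*} [DivisionRing K] [AddCommGroup V] [Module K V]

theorem finrank_span_le_ncard {s : Set V} (hs : s.Finite) :
    finrank K (span K s) ≤ s.ncard := by
  have := finrank_span_finset_le_card (R := K) hs.toFinset
  rwa [Set.Finite.coe_toFinset, ← ncard_eq_toFinset_card s hs] at this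

theorem ncard_sub_finrank_span_le_of_subset {s t : Set V} (hs : s.Finite) (hts : t ⊆ s) :
    t.ncard - finrank K (span K t) ≤ s.ncard - finrank K (span K s) := by
  have ht := hs.subset hts
  have hrank : finrank K (span K s) ≤ finrank K (span K t) + (s \ t).ncard := by
    calc finrank K (span K s) = finrank K ↥(span K t ⊔ span K (s \ t)) := by
          rw [← span_union, union_sdiff_cancel hts]
      _ ≤ finrank K (span K t) + finrank K (span K (s \ t)) :=
          have := FiniteDimensional.span_of_finite K ht
          have := FiniteDimensional.span_of_finite K (hs.sdiff (t := t))
          finrank_add_le_finrank_add_finrank _ _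
      _ ≤ finrank K (span K t) + (s \ t).ncard := by
          gcongr; exact finrank_span_le_ncard hs.sdiff
  have hcard : (s \ t).ncard = s.ncard - t.ncard := ncard_sdiff hts ht
  have := ncard_le_ncard hts hs
  omega

theorem ncard_sub_finrank_span_lt_of_mem_span_sdiff {s t : Set V} (hs : s.Finite) (hts : t ⊆ s)
    {x : V} (hxs : x ∈ s) (hxt : x ∉ t) (hx : x ∈ span K (s \ {x})) :
    t.ncard - finrank K (span K t) < s.ncard - finrank K (span K s) := by
  have hle := ncard_sub_finrank_span_le_of_subset (K := K) hs.sdiff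
    (fun y hy => ⟨hts hy, fun h => hxt (h ▸ hy)⟩ : t ⊆ s \ {x})
  have hspan : span K (s \ {x}) = span K s := by
    rw [← span_insert_eq_span hx, insert_sdiff_singleton, insert_eq_of_mem hxs]
  have hcard : (s \ {x}).ncard = s.ncard - 1 := ncard_sdiff_singleton_of_mem hxs
  have hrank := finrank_span_le_ncard (K := K) (hs.sdiff (t := {x}))
  have hpos : 0 < s.ncard := (ncard_pos hs).2 ⟨x, hxs⟩
  rw [hspan] at hle hrank
  omega

end Deficiency

section PairForms

variable (K ι : Type*) [Field K]

noncomputable def pairForm : Sym2 ι → (ι → K) →ₗ[K] K :=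
  Sym2.lift ⟨fun i j => LinearMap.proj i + LinearMap.proj j, fun _ _ => add_comm _ _⟩

variable {K ι}

@[simp]
theorem pairForm_mk (i j : ι) :
    pairForm K ι s(i, j) = (LinearMap.proj i : (ι → K) →ₗ[K] K) + LinearMap.proj j := rfl

theorem pairForm_apply_single_ne_zero_iff [NeZero (2 : K)] [DecidableEq ι] (z : Sym2 ι) (x : ι) :
    pairForm K ι z (Pi.single x 1) ≠ 0 ↔ x ∈ z := by
  induction z using Sym2.ind with
  | _ i j =>
    simp only [pairForm_mk, LinearMap.add_apply, LinearMap.proj_apply, Pi.single_apply,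
      Sym2.mem_iff]
    split_ifs <;> simp_all [one_add_one_eq_two, eq_comm, (NeZero.ne (2 : K)).symm]

theorem pairForm_injective [NeZero (2 : K)] : Function.Injective (pairForm K ι) := by
  classical
  intro z w h
  refine Sym2.ext fun x => ?_
  rw [← pairForm_apply_single_ne_zero_iff (K := K), ← pairForm_apply_single_ne_zero_iff (K := K), h]

theorem proj_mem_span_range_pairForm [NeZero (2 : K)] (i : ι) :
    (LinearMap.proj i : (ι → K) →ₗ[K] K) ∈ span K (range (pairForm K ι)) := by
  have h : (2 : K)⁻¹ • pairForm K ι s(i, i) = LinearMap.proj i := by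
    rw [pairForm_mk, ← two_smul K, smul_smul, inv_mul_cancel₀ two_ne_zero, one_smul]
  exact h ▸ smul_mem _ _ (subset_span (mem_range_self _))

theorem span_range_pairForm [NeZero (2 : K)] [Finite ι] :
    span K (range (pairForm K ι)) = ⊤ := by
  classical
  rw [eq_top_iff, ← (Pi.basisFun K ι).dualBasis.span_eq, span_le, range_subset_iff]
  intro i
  have h : (Pi.basisFun K ι).dualBasis i = LinearMap.proj i := by
    ext x; simp
  rw [SetLike.mem_coe, h]
  exact proj_mem_span_range_pairForm i

theorem pairForm_mem_span_range_sdiff [NeZero (2 : K)] [Nontrivial ι] (z : Sym2 ι) :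
    pairForm K ι z ∈ span K (range (pairForm K ι) \ {pairForm K ι z}) := by
  have mem : ∀ w, w ≠ z → pairForm K ι w ∈ span K (range (pairForm K ι) \ {pairForm K ι z}) :=
    fun w hw => subset_span ⟨mem_range_self w, pairForm_injective.ne hw⟩
  induction z using Sym2.ind with
  | _ i j =>
    rcases eq_or_ne i j with rfl | hij
    · obtain ⟨l, hl⟩ := exists_ne i
      have h : (2 : K) • pairForm K ι s(i, l) - pairForm K ι s(l, l) = pairForm K ι s(i, i) := by
        simp only [pairForm_mk]; module
      have key := sub_mem (smul_mem _ (2 : K) (mem s(i, l) ?_)) (mem s(l, l) ?_)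
      · rwa [h] at key
      all_goals simp [hl]
    · have h : (2 : K)⁻¹ • pairForm K ι s(i, i) + (2 : K)⁻¹ • pairForm K ι s(j, j) =
          pairForm K ι s(i, j) := by
        rw [← smul_add, inv_smul_eq_iff₀ two_ne_zero]
        simp only [pairForm_mk]; module
      have key := add_mem (smul_mem _ (2 : K)⁻¹ (mem s(i, i) ?_))
        (smul_mem _ (2 : K)⁻¹ (mem s(j, j) ?_))
      · rwa [h] at key
      all_goals simp [hij, hij.symm]

theorem setOf_eq_range_pairForm [LinearOrder ι] :
    {f : (ι → K) →ₗ[K] K | (∃ j : ι, f = (2 : K) • (LinearMap.proj j : (ι → K) →ₗ[K] K)) ∨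
      ∃ i j : ι, i < j ∧ f = (LinearMap.proj i : (ι → K) →ₗ[K] K) + LinearMap.proj j} =
      range (pairForm K ι) := by
  ext f
  constructor
  · rintro (⟨j, rfl⟩ | ⟨i, j, -, rfl⟩)
    · exact ⟨s(j, j), by rw [pairForm_mk, two_smul]⟩
    · exact ⟨s(i, j), rfl⟩
  · rintro ⟨z, rfl⟩
    induction z using Sym2.ind with
    | _ i j =>
      rcases lt_trichotomy i j with h | rfl | h
      · exact Or.inr ⟨i, j, h, rfl⟩
      · exact Or.inl ⟨i, by rw [pairForm_mk, two_smul]⟩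
      · exact Or.inr ⟨j, i, h, add_comm _ _⟩

theorem ncard_range_pairForm [NeZero (2 : K)] [Fintype ι] :
    (range (pairForm K ι)).ncard = (Fintype.card ι + 1).choose 2 := by
  rw [ncard_range_of_injective pairForm_injective, Nat.card_eq_fintype_card, Sym2.card]

theorem finrank_span_range_pairForm [NeZero (2 : K)] [Fintype ι] :
    finrank K (span K (range (pairForm K ι))) = Fintype.card ι := by
  rw [span_range_pairForm, finrank_top, finrank_linearMap_self, finrank_fintype_fun_eq_card]

end PairForms

theorem stmt_13 (k : ℕ) (hk : 2 ≤ k) :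
    let L0 : Set ((Fin k → ℝ) →ₗ[ℝ] ℝ) :=
      {f | (∃ j : Fin k, f = (2 : ℝ) • (LinearMap.proj j : (Fin k → ℝ) →ₗ[ℝ] ℝ)) ∨
        ∃ i j : Fin k, i < j ∧ f = (LinearMap.proj i : (Fin k → ℝ) →ₗ[ℝ] ℝ) +
          (LinearMap.proj j : (Fin k → ℝ) →ₗ[ℝ] ℝ)}
    let B : (Fin k → ℝ) →ₗ[ℝ] ℝ := ∑ j : Fin k, (LinearMap.proj j : (Fin k → ℝ) →ₗ[ℝ] ℝ)
    L0.ncard - Module.finrank ℝ (Submodule.span ℝ L0) = k * (k - 1) / 2 ∧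
      ¬∃ L' : Set ((Fin k → ℝ) →ₗ[ℝ] ℝ), L' ⊆ L0 ∧ L' ≠ L0 ∧
        B ∈ Submodule.span ℝ L' ∧
        L'.ncard - Module.finrank ℝ (Submodule.span ℝ L') = k * (k - 1) / 2 := by
  intro L0 B
  have hL0 : L0 = range (pairForm ℝ (Fin k)) := setOf_eq_range_pairForm
  have hdef : L0.ncard - finrank ℝ (span ℝ L0) = k * (k - 1) / 2 := by
    rw [hL0, ncard_range_pairForm, finrank_span_range_pairForm, Fintype.card_fin,
      Nat.choose_succ_succ', Nat.choose_one_right, Nat.add_sub_cancel_left, Nat.choose_two_right]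
  refine ⟨hdef, ?_⟩
  rintro ⟨L', hsub, hne, -, hL'⟩
  obtain ⟨f, hfL0, hfL'⟩ := exists_of_ssubset (hsub.ssubset_of_ne hne)
  have : Nontrivial (Fin k) := Fin.nontrivial_iff_two_le.2 hk
  have hf : f ∈ span ℝ (L0 \ {f}) := by
    rw [hL0] at hfL0 ⊢
    obtain ⟨z, rfl⟩ := hfL0
    exact pairForm_mem_span_range_sdiff z
  have := ncard_sub_finrank_span_lt_of_mem_span_sdiff (hL0 ▸ finite_range _) hsub hfL0 hfL' hf
  omega
end
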